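/- arXiv:1607.08498 — 2 statements merged into one kernel-verified Lean document; each statement's English description precedes it below -/
import Mathlib

section
/- Let x ∈ [l,u], and define x̃ by x̃_i := l_i for i ∈ A_l(x), x̃_i := u_i for i ∈ A_u(x), and x̃_i := x_i for i ∈ N(x). Then g(x)ᵀ(x̃ − x) ≤ −(1/ε)·‖x − x̃‖². -/
open Finset

/-- The gradient of `f` at `x`: its `i`-th component is the partial derivative of `f`
in the `i`-th coordinate direction (the Euclidean gradient). -/
noncomputable def grad {n : ℕ} (f : (Fin n → ℝ) → ℝ) (x : Fin n → ℝ) (i : Fin n) : ℝ :=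
  fderiv ℝ f x (Pi.single i 1)

/-- The multiplier function `λ_i(x)`. -/
noncomputable def lamMul {n : ℕ} (f : (Fin n → ℝ) → ℝ) (l u x : Fin n → ℝ) (i : Fin n) : ℝ :=
  (u i - x i) ^ 2 / ((l i - x i) ^ 2 + (u i - x i) ^ 2) * grad f x i

/-- The multiplier function `μ_i(x)`. -/
noncomputable def muMul {n : ℕ} (f : (Fin n → ℝ) → ℝ) (l u x : Fin n → ℝ) (i : Fin n) : ℝ :=
  -((l i - x i) ^ 2 / ((l i - x i) ^ 2 + (u i - x i) ^ 2) * grad f x i)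

/-- The estimate `A_l(x)` of the variables active at the lower bound. -/
def estAl {n : ℕ} (f : (Fin n → ℝ) → ℝ) (l u : Fin n → ℝ) (ε : ℝ) (x : Fin n → ℝ) :
    Set (Fin n) :=
  {i | l i ≤ x i ∧ x i ≤ l i + ε * lamMul f l u x i ∧ 0 < grad f x i}

/-- The estimate `A_u(x)` of the variables active at the upper bound. -/
def estAu {n : ℕ} (f : (Fin n → ℝ) → ℝ) (l u : Fin n → ℝ) (ε : ℝ) (x : Fin n → ℝ) :
    Set (Fin n) :=
  {i | u i - ε * muMul f l u x i ≤ x i ∧ x i ≤ u i ∧ grad f x i < 0}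

/-- The estimate `N(x)` of the non-active variables. -/
def estN {n : ℕ} (f : (Fin n → ℝ) → ℝ) (l u : Fin n → ℝ) (ε : ℝ) (x : Fin n → ℝ) :
    Set (Fin n) :=
  {i | i ∉ estAl f l u ε x ∧ i ∉ estAu f l u ε x}

/-- Componentwise projection onto the box `[l, u]`. -/
def projBox {n : ℕ} (l u y : Fin n → ℝ) : Fin n → ℝ :=
  fun i => min (u i) (max (l i) (y i))

/-- First-order optimality (stationarity) conditions at a feasible point. -/
def IsStationaryBox {n : ℕ} (f : (Fin n → ℝ) → ℝ) (l u x : Fin n → ℝ) : Prop :=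
  ∀ i, (x i = l i → 0 ≤ grad f x i) ∧ (x i = u i → grad f x i ≤ 0) ∧
    (l i < x i → x i < u i → grad f x i = 0)

/-!
On `A_l(x)` the weight in `λ_i` lies in `[0, 1]` and `g_i(x) > 0`, so
`0 ≤ x_i - l_i ≤ ε λ_i(x) ≤ ε g_i(x)`; multiplying by `x_i - l_i` gives
`g_i(x) (l_i - x_i) ≤ -(x_i - l_i)² / ε`. The case `A_u(x)` is symmetric, and on `N(x)` both
sides vanish.
-/

lemma div_add_sq_le_one (a b : ℝ) : a ^ 2 / (b ^ 2 + a ^ 2) ≤ 1 :=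
  div_le_one_of_le₀ (le_add_of_nonneg_left (sq_nonneg b)) (by positivity)

lemma sq_div_le_mul_of_le_mul {ε d g : ℝ} (hε : 0 < ε) (hd : 0 ≤ d) (h : d ≤ ε * g) :
    d ^ 2 / ε ≤ g * d := by
  rw [div_le_iff₀ hε]
  nlinarith

section Coordinate

variable {n : ℕ} {f : (Fin n → ℝ) → ℝ} {l u x : Fin n → ℝ} {ε : ℝ} {i : Fin n}

lemma lamMul_le_grad (hg : 0 ≤ grad f x i) : lamMul f l u x i ≤ grad f x i :=
  mul_le_of_le_one_left hg (div_add_sq_le_one _ _)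

lemma muMul_le_neg_grad (hg : grad f x i ≤ 0) : muMul f l u x i ≤ -grad f x i := by
  rw [muMul, ← mul_neg]
  exact mul_le_of_le_one_left (neg_nonneg.mpr hg) (by rw [add_comm]; exact div_add_sq_le_one _ _)

lemma grad_mul_sub_le_of_mem_estAl (hε : 0 < ε) (hi : i ∈ estAl f l u ε x) :
    grad f x i * (l i - x i) ≤ -(1 / ε) * (x i - l i) ^ 2 := by
  obtain ⟨hlx, hxl, hg⟩ := hi
  have hstep : x i - l i ≤ ε * grad f x i :=
    (sub_le_iff_le_add'.mpr hxl).trans (mul_le_mul_of_nonneg_left (lamMul_le_grad hg.le) hε.le)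
  have := sq_div_le_mul_of_le_mul hε (sub_nonneg.mpr hlx) hstep
  rw [neg_mul, one_div_mul_eq_div]
  linarith

lemma grad_mul_sub_le_of_mem_estAu (hε : 0 < ε) (hi : i ∈ estAu f l u ε x) :
    grad f x i * (u i - x i) ≤ -(1 / ε) * (x i - u i) ^ 2 := by
  obtain ⟨hux, hxu, hg⟩ := hi
  have hstep : u i - x i ≤ ε * -grad f x i :=
    (sub_le_comm.mp hux).trans (mul_le_mul_of_nonneg_left (muMul_le_neg_grad hg.le) hε.le)
  have := sq_div_le_mul_of_le_mul hε (sub_nonneg.mpr hxu) hstep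
  rw [neg_mul, one_div_mul_eq_div, ← neg_sub (u i), neg_sq]
  linarith

end Coordinate

theorem active_set_directional_bound_general {n : ℕ} (f : (Fin n → ℝ) → ℝ)
    (l u : Fin n → ℝ) (ε : ℝ) (hε : 0 < ε)
    (x : Fin n → ℝ)
    (xt : Fin n → ℝ)
    (hxt1 : ∀ i ∈ estAl f l u ε x, xt i = l i)
    (hxt2 : ∀ i ∈ estAu f l u ε x, xt i = u i)
    (hxt3 : ∀ i ∈ estN f l u ε x, xt i = x i) :
    ∑ i, grad f x i * (xt i - x i) ≤ -(1 / ε) * ∑ i, (x i - xt i) ^ 2 := by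
  rw [mul_sum]
  refine sum_le_sum fun i _ => ?_
  by_cases hl : i ∈ estAl f l u ε x
  · rw [hxt1 i hl]
    exact grad_mul_sub_le_of_mem_estAl hε hl
  by_cases hu : i ∈ estAu f l u ε x
  · rw [hxt2 i hu]
    exact grad_mul_sub_le_of_mem_estAu hε hu
  · simp [hxt3 i ⟨hl, hu⟩]

/-- directional-derivative bound for the move to the estimated active bounds. -/
theorem active_set_directional_bound {n : ℕ} (f : (Fin n → ℝ) → ℝ) (hf : ContDiff ℝ 2 f)
    (l u : Fin n → ℝ) (hlu : ∀ i, l i < u i) (ε : ℝ) (hε : 0 < ε)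
    (x : Fin n → ℝ) (hx : ∀ i, l i ≤ x i ∧ x i ≤ u i)
    (xt : Fin n → ℝ)
    (hxt1 : ∀ i ∈ estAl f l u ε x, xt i = l i)
    (hxt2 : ∀ i ∈ estAu f l u ε x, xt i = u i)
    (hxt3 : ∀ i ∈ estN f l u ε x, xt i = x i) :
    ∑ i, grad f x i * (xt i - x i) ≤ -(1 / ε) * ∑ i, (x i - xt i) ^ 2 :=
  active_set_directional_bound_general f l u ε hε x xt hxt1 hxt2 hxt3
end

section
/- Let x̄ ∈ [l,u] and let d ∈ ℝⁿ satisfy d_i = 0 for all i ∈ A_l(x̄) ∪ A_u(x̄). Then there exists α̂ > 0 such that for all α ∈ (0, α̂], g(x̄)ᵀ([x̄ + α d]♯ − x̄) ≤ α·Σ_{i∈N(x̄)} g_i(x̄)·d_i. -/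
open Finset

open scoped Classical

/-!
Since `d` vanishes outside `N(x̄)`, the inequality can be checked coordinate by coordinate.
For small `α` a coordinate of `x̄ + α d` either stays in `[l_i, u_i]`, where the projection does
nothing, or leaves it through a bound at which `x̄_i` already sits; then the projection keeps
`x̄_i` and the left side is `0`. In that case `i ∉ A_l(x̄)` forces `g_i(x̄) ≤ 0` at `x̄_i = l_i`,
since there `λ_i(x̄) = g_i(x̄)` (symmetrically at `u_i`, with `μ_i(x̄) = -g_i(x̄)`), so
`g_i(x̄) d_i ≥ 0`.
-/

open Filter Topology

section BoxStep

variable {l u x d : ℝ}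

lemma eventually_le_add_mul (hlx : l ≤ x) (hd : d < 0 → l < x) :
    ∀ᶠ α in 𝓝[>] (0 : ℝ), l ≤ x + α * d := by
  rcases le_or_gt 0 d with hd0 | hd0
  · filter_upwards [self_mem_nhdsWithin] with α (hα : 0 < α)
    nlinarith
  · have hcont : Continuous fun α : ℝ => x + α * d := by fun_prop
    have hlim : Tendsto (fun α : ℝ => x + α * d) (𝓝 0) (𝓝 x) := by
      simpa using hcont.tendsto 0
    filter_upwards [nhdsWithin_le_nhds (hlim.eventually (lt_mem_nhds (hd hd0)))] with α hα
    exact hα.le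

lemma eventually_add_mul_le (hxu : x ≤ u) (hd : 0 < d → x < u) :
    ∀ᶠ α in 𝓝[>] (0 : ℝ), x + α * d ≤ u := by
  filter_upwards [eventually_le_add_mul (l := -u) (x := -x) (d := -d) (neg_le_neg hxu)
    (fun h => neg_lt_neg (hd (neg_neg_iff_pos.mp h)))] with α hα
  linarith

lemma eventually_min_max_add_mul_eq (hlx : l ≤ x) (hxu : x ≤ u)
    (hdl : d < 0 → l < x) (hdu : 0 < d → x < u) :
    ∀ᶠ α in 𝓝[>] (0 : ℝ), min u (max l (x + α * d)) = x + α * d := by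
  filter_upwards [eventually_le_add_mul hlx hdl, eventually_add_mul_le hxu hdu] with α hl hu
  rw [max_eq_right hl, min_eq_right hu]

lemma eventually_mul_min_max_sub_le {g : ℝ} (hlx : l ≤ x) (hxu : x ≤ u)
    (hgl : x = l → d < 0 → g ≤ 0) (hgu : x = u → 0 < d → 0 ≤ g) :
    ∀ᶠ α in 𝓝[>] (0 : ℝ), g * (min u (max l (x + α * d)) - x) ≤ α * (g * d) := by
  by_cases hout_l : x = l ∧ d < 0
  · obtain ⟨rfl, hd⟩ := hout_l
    filter_upwards [self_mem_nhdsWithin] with α (hα : 0 < α)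
    have hstep : x + α * d ≤ x := by nlinarith
    rw [max_eq_left hstep, min_eq_right hxu, sub_self, mul_zero]
    nlinarith [hgl rfl hd]
  by_cases hout_u : x = u ∧ 0 < d
  · obtain ⟨rfl, hd⟩ := hout_u
    filter_upwards [self_mem_nhdsWithin] with α (hα : 0 < α)
    have hstep : x ≤ x + α * d := by nlinarith
    rw [max_eq_right (hlx.trans hstep), min_eq_left hstep, sub_self, mul_zero]
    nlinarith [hgu rfl hd]
  have hdl : d < 0 → l < x := fun hd => lt_of_le_of_ne hlx fun h => hout_l ⟨h.symm, hd⟩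
  have hdu : 0 < d → x < u := fun hd => lt_of_le_of_ne hxu fun h => hout_u ⟨h, hd⟩
  filter_upwards [eventually_min_max_add_mul_eq hlx hxu hdl hdu] with α hα
  rw [hα]
  linarith

end BoxStep

lemma exists_forall_Ioc_of_eventually_nhdsGT {a : ℝ} {p : ℝ → Prop} (h : ∀ᶠ t in 𝓝[>] a, p t) :
    ∃ b > a, ∀ t : ℝ, a < t → t ≤ b → p t := by
  obtain ⟨b, hab, hsub⟩ := mem_nhdsGT_iff_exists_Ioc_subset.mp h
  exact ⟨b, hab, fun t hat htb => hsub ⟨hat, htb⟩⟩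

section ActiveSet

variable {n : ℕ} {f : (Fin n → ℝ) → ℝ} {l u x : Fin n → ℝ} {ε : ℝ} {i : Fin n}

lemma lamMul_of_eq_lower (hlu : l i ≠ u i) (hxl : x i = l i) :
    lamMul f l u x i = grad f x i := by
  have : (u i - x i) ^ 2 ≠ 0 := pow_ne_zero 2 (sub_ne_zero.mpr (hxl ▸ hlu.symm))
  rw [lamMul, hxl, sub_self, ← hxl, zero_pow two_ne_zero, zero_add, div_self this, one_mul]

lemma muMul_of_eq_upper (hlu : l i ≠ u i) (hxu : x i = u i) :
    muMul f l u x i = -grad f x i := by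
  have : (l i - x i) ^ 2 ≠ 0 := pow_ne_zero 2 (sub_ne_zero.mpr (hxu ▸ hlu))
  rw [muMul, hxu, sub_self, ← hxu, zero_pow two_ne_zero, add_zero, div_self this, one_mul]

lemma grad_nonpos_of_notMem_estAl (hi : i ∉ estAl f l u ε x) (hlu : l i < u i) (hε : 0 ≤ ε)
    (hxl : x i = l i) : grad f x i ≤ 0 := by
  by_contra! hg
  refine hi ⟨hxl.ge, ?_, hg⟩
  rw [lamMul_of_eq_lower hlu.ne hxl, hxl]
  nlinarith

lemma grad_nonneg_of_notMem_estAu (hi : i ∉ estAu f l u ε x) (hlu : l i < u i) (hε : 0 ≤ ε)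
    (hxu : x i = u i) : 0 ≤ grad f x i := by
  by_contra! hg
  refine hi ⟨?_, hxu.le, hg⟩
  rw [muMul_of_eq_upper hlu.ne hxu, hxu]
  nlinarith

end ActiveSet

theorem projected_step_directional_bound_general {n : ℕ} (f : (Fin n → ℝ) → ℝ)
    (l u : Fin n → ℝ) (hlu : ∀ i, l i < u i) (ε : ℝ) (hε : 0 < ε)
    (x : Fin n → ℝ) (hx : ∀ i, l i ≤ x i ∧ x i ≤ u i)
    (d : Fin n → ℝ) (hd0 : ∀ i ∈ estAl f l u ε x ∪ estAu f l u ε x, d i = 0) :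
    ∃ ahat > (0 : ℝ), ∀ α : ℝ, 0 < α → α ≤ ahat →
      ∑ i, grad f x i * (projBox l u (fun j => x j + α * d j) i - x i) ≤
        α * ∑ i ∈ Finset.univ.filter (· ∈ estN f l u ε x), grad f x i * d i := by
  have hN : ∀ i, d i ≠ 0 → i ∈ estN f l u ε x := fun i hdi =>
    ⟨fun h => hdi (hd0 i (Or.inl h)), fun h => hdi (hd0 i (Or.inr h))⟩
  have hsum : ∑ i ∈ Finset.univ.filter (· ∈ estN f l u ε x), grad f x i * d i =
      ∑ i, grad f x i * d i :=
    sum_filter_of_ne fun i _ h => hN i (right_ne_zero_of_mul h)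
  have hcoord : ∀ i, ∀ᶠ α in 𝓝[>] (0 : ℝ),
      grad f x i * (projBox l u (fun j => x j + α * d j) i - x i) ≤ α * (grad f x i * d i) :=
    fun i => eventually_mul_min_max_sub_le (hx i).1 (hx i).2
      (fun hxl hd => grad_nonpos_of_notMem_estAl (hN i hd.ne).1 (hlu i) hε.le hxl)
      (fun hxu hd => grad_nonneg_of_notMem_estAu (hN i hd.ne').2 (hlu i) hε.le hxu)
  obtain ⟨ahat, hpos, hsmall⟩ := exists_forall_Ioc_of_eventually_nhdsGT (eventually_all.mpr hcoord)
  refine ⟨ahat, hpos, fun α h0 h1 => ?_⟩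
  rw [hsum, mul_sum]
  exact sum_le_sum fun i _ => hsmall α h0 h1 i

/-- for small stepsizes, the directional derivative term of the projected
step is majorized by the non-active part of the directional derivative. -/
theorem projected_step_directional_bound {n : ℕ} (f : (Fin n → ℝ) → ℝ)
    (hf : ContDiff ℝ 2 f) (l u : Fin n → ℝ) (hlu : ∀ i, l i < u i) (ε : ℝ) (hε : 0 < ε)
    (x : Fin n → ℝ) (hx : ∀ i, l i ≤ x i ∧ x i ≤ u i)
    (d : Fin n → ℝ) (hd0 : ∀ i ∈ estAl f l u ε x ∪ estAu f l u ε x, d i = 0) :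
    ∃ ahat > (0 : ℝ), ∀ α : ℝ, 0 < α → α ≤ ahat →
      ∑ i, grad f x i * (projBox l u (fun j => x j + α * d j) i - x i) ≤
        α * ∑ i ∈ Finset.univ.filter (· ∈ estN f l u ε x), grad f x i * d i :=
  projected_step_directional_bound_general f l u hlu ε hε x hx d hd0
end
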